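/- The map Ω : ℤ^6 → ℤ^{12}, Ω(x33, x22, x32, x11, x21, x31) = (b11, b12, b13, b14, b22, b23, b24, b25, b33, b34, b35, b36) with b11 = x11, b12 = x22 − x11, b13 = x33 − x22, b14 = −x33, b22 = x21, b23 = x32 − x21, b24 = x22 − x32, b25 = −x22, b33 = x31, b34 = x21 − x31, b35 = x11 − x21, b36 = −x11, is a bijection from ℤ^6 onto B^{3,∞}, and for k = 0, 1, 2, 3 and all x ∈ ℤ^6: wt_k(Ω(x)) = wt_k(x) and ε_k(Ω(x)) = ε_k(x). -/
import Mathlib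


namespace Stmt15

/-! Ultra-discretized `C_3^{(1)}`-crystal on `ℤ^6`, coordinates
`x = (x33, x22, x32, x11, x21, x31)` at indices `0, …, 5`.
Crystal `B^{3,∞} ⊂ ℤ^{12}`, coordinates
`b = (b11, b12, b13, b14, b22, b23, b24, b25, b33, b34, b35, b36)`
at indices `0, …, 11`. -/

def wtX : Fin 4 → (Fin 6 → ℤ) → ℤ :=
  ![fun x => -2 * x 3,
    fun x => 2 * x 3 - x 4 - x 1,
    fun x => 2 * x 4 + 2 * x 1 - x 3 - x 5 - x 2 - x 0,
    fun x => 2 * x 5 + 2 * x 2 + 2 * x 0 - 2 * x 4 - 2 * x 1]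

def epsX : Fin 4 → (Fin 6 → ℤ) → ℤ :=
  ![fun x => max (max (max (max (x 5) (2 * x 4 - x 2)) (x 4 + x 3 - x 1))
      (2 * x 3 + x 2 - 2 * x 1)) (2 * x 3 - x 0),
    fun x => x 1 - x 3,
    fun x => max (x 0 - x 1) (x 0 + x 2 + x 3 - 2 * x 1 - x 4),
    fun x => max (max (-x 0) (2 * x 1 - 2 * x 0 - x 2))
      (2 * x 1 + 2 * x 4 - 2 * x 0 - 2 * x 2 - x 5)]

def B3inf : Set (Fin 12 → ℤ) :=
  {b | b 0 + b 1 + b 2 + b 3 = 0 ∧ b 4 + b 5 + b 6 + b 7 = 0 ∧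
    b 8 + b 9 + b 10 + b 11 = 0 ∧ b 0 = b 8 + b 9 + b 10 ∧
    b 11 = b 1 + b 2 + b 3 ∧ b 4 = b 8 + b 9 ∧ b 7 = b 2 + b 3}

def wtB : Fin 4 → (Fin 12 → ℤ) → ℤ :=
  ![fun b => b 11 - b 0,
    fun b => b 10 - b 1,
    fun b => b 4 - b 8 - b 7 + b 3 + b 1 - b 5,
    fun b => b 8 - b 3 + b 2 - b 6 + b 5 - b 9]

def epsB : Fin 4 → (Fin 12 → ℤ) → ℤ :=
  ![fun b => -b 11 - min (min (min (min (b 1 + b 2) (b 5 + b 6)) (b 9 + b 10))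
      (b 1 + b 6)) (b 5 + b 10),
    fun b => b 1,
    fun b => b 2 + max (b 5 - b 1) 0,
    fun b => b 3 + max (max (b 6 - b 2) (b 9 + b 6 - b 2 - b 5)) 0]

def Omega (x : Fin 6 → ℤ) : Fin 12 → ℤ :=
  ![x 3, x 1 - x 3, x 0 - x 1, -x 0,
    x 4, x 2 - x 4, x 1 - x 2, -x 1,
    x 5, x 4 - x 5, x 3 - x 4, -x 3]

/-- `Ω` is a bijection from `ℤ^6` onto `B^{3,∞}` preserving all `wt_k` and
`ε_k`, `k = 0, 1, 2, 3`. -/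
theorem Omega_bijection_wt_eps :
    Function.Injective Omega ∧ Set.range Omega = B3inf ∧
    ∀ (k : Fin 4) (x : Fin 6 → ℤ),
      wtB k (Omega x) = wtX k x ∧ epsB k (Omega x) = epsX k x := by
  refine ⟨?_, ?_, ?_⟩
  · intro x y h
    have h0 : x 3 = y 3 := congrFun h 0
    have h1 : x 1 - x 3 = y 1 - y 3 := congrFun h 1
    have h2 : x 0 - x 1 = y 0 - y 1 := congrFun h 2
    have h4 : x 4 = y 4 := congrFun h 4
    have h5 : x 2 - x 4 = y 2 - y 4 := congrFun h 5
    have h8 : x 5 = y 5 := congrFun h 8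
    funext i
    fin_cases i <;> simp <;> omega
  · ext b
    constructor
    · rintro ⟨x, rfl⟩
      show x 3 + (x 1 - x 3) + (x 0 - x 1) + (-x 0) = 0 ∧
        x 4 + (x 2 - x 4) + (x 1 - x 2) + (-x 1) = 0 ∧
        x 5 + (x 4 - x 5) + (x 3 - x 4) + (-x 3) = 0 ∧
        x 3 = x 5 + (x 4 - x 5) + (x 3 - x 4) ∧
        -x 3 = (x 1 - x 3) + (x 0 - x 1) + (-x 0) ∧
        x 4 = x 5 + (x 4 - x 5) ∧ -x 1 = (x 0 - x 1) + (-x 0)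
      omega
    · rintro ⟨h1, h2, h3, h4, h5, h6, h7⟩
      refine ⟨![-(b 3), -(b 7), b 4 + b 5, b 0, b 4, b 8], ?_⟩
      funext i
      fin_cases i
      · show b 0 = b 0; rfl
      · show -(b 7) - b 0 = b 1; omega
      · show -(b 3) - -(b 7) = b 2; omega
      · show -(-(b 3)) = b 3; omega
      · show b 4 = b 4; rfl
      · show (b 4 + b 5) - b 4 = b 5; omega
      · show -(b 7) - (b 4 + b 5) = b 6; omega
      · show -(-(b 7)) = b 7; omega
      · show b 8 = b 8; rfl
      · show b 4 - b 8 = b 9; omega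
      · show b 0 - b 4 = b 10; omega
      · show -(b 0) = b 11; omega
  · intro k x
    fin_cases k
    · constructor
      · show -x 3 - x 3 = -2 * x 3; ring
      · show -(-x 3) - min (min (min (min ((x 1 - x 3) + (x 0 - x 1))
            ((x 2 - x 4) + (x 1 - x 2))) ((x 4 - x 5) + (x 3 - x 4)))
            ((x 1 - x 3) + (x 1 - x 2))) ((x 2 - x 4) + (x 3 - x 4)) =
          max (max (max (max (x 5) (2 * x 4 - x 2)) (x 4 + x 3 - x 1))
            (2 * x 3 + x 2 - 2 * x 1)) (2 * x 3 - x 0)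
        omega
    · constructor
      · show (x 3 - x 4) - (x 1 - x 3) = 2 * x 3 - x 4 - x 1; ring
      · show x 1 - x 3 = x 1 - x 3; rfl
    · constructor
      · show x 4 - x 5 - (-x 1) + (-x 0) + (x 1 - x 3) - (x 2 - x 4) =
          2 * x 4 + 2 * x 1 - x 3 - x 5 - x 2 - x 0
        ring
      · show (x 0 - x 1) + max ((x 2 - x 4) - (x 1 - x 3)) 0 =
          max (x 0 - x 1) (x 0 + x 2 + x 3 - 2 * x 1 - x 4)
        omega
    · constructor
      · show x 5 - (-x 0) + (x 0 - x 1) - (x 1 - x 2) + (x 2 - x 4) - (x 4 - x 5) =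
          2 * x 5 + 2 * x 2 + 2 * x 0 - 2 * x 4 - 2 * x 1
        ring
      · show -x 0 + max (max ((x 1 - x 2) - (x 0 - x 1))
            ((x 4 - x 5) + (x 1 - x 2) - (x 0 - x 1) - (x 2 - x 4))) 0 =
          max (max (-x 0) (2 * x 1 - 2 * x 0 - x 2))
            (2 * x 1 + 2 * x 4 - 2 * x 0 - 2 * x 2 - x 5)
        omega

end Stmt15
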